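/- Let F : C → D be a normal lax symmetric monoidal functor, let M ∈ C be dualizable with dual Mᵛ such that c : F(M) ⊗ F(Mᵛ) → F(M ⊗ Mᵛ) is an isomorphism (so F(M) is dualizable with dual F(Mᵛ)). Then for any endomorphism f : M → M, one has F(tr(f)) = i ∘ tr(F(f)) ∘ i⁻¹ : F(I_C) → F(I_C), where tr(f) : I_C → I_C is the trace of f in C and tr(F(f)) : I_D → I_D is the trace of F(f) in D computed using the dual F(Mᵛ) of F(M). -/
import Mathlib


open CategoryTheory MonoidalCategory Functor.LaxMonoidal

universe v u v₂ u₂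

variable {C : Type u} [Category.{v} C] [MonoidalCategory C] [SymmetricCategory C]
variable {D : Type u₂} [Category.{v₂} D] [MonoidalCategory D] [SymmetricCategory D]

/-- `(Mᵛ, η, ε)` is a dual pair for `M`: the coevaluation `η : I ⟶ M ⊗ Mᵛ` and
evaluation `ε : Mᵛ ⊗ M ⟶ I` satisfy the triangle identities. -/
def IsDualPair {C : Type u} [Category.{v} C] [MonoidalCategory C]
    (M Mv : C) (η : 𝟙_ C ⟶ M ⊗ Mv) (ε : Mv ⊗ M ⟶ 𝟙_ C) : Prop :=
  ((λ_ M).inv ≫ η ▷ M ≫ (α_ M Mv M).hom ≫ M ◁ ε ≫ (ρ_ M).hom = 𝟙 M) ∧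
  ((ρ_ Mv).inv ≫ Mv ◁ η ≫ (α_ Mv M Mv).inv ≫ ε ▷ Mv ≫ (λ_ Mv).hom = 𝟙 Mv)

/-- The trace of an endomorphism `f : M ⟶ M` of a dualizable object `M`:
`I ⟶ M ⊗ Mᵛ ⟶ M ⊗ Mᵛ ⟶ Mᵛ ⊗ M ⟶ I`. -/
def trEnd {C : Type u} [Category.{v} C] [MonoidalCategory C] [SymmetricCategory C]
    (M Mv : C) (η : 𝟙_ C ⟶ M ⊗ Mv) (ε : Mv ⊗ M ⟶ 𝟙_ C) (f : M ⟶ M) :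
    𝟙_ C ⟶ 𝟙_ C :=
  η ≫ f ▷ Mv ≫ (β_ M Mv).hom ≫ ε

/-- A normal lax symmetric monoidal functor preserving the dual of `M` preserves traces:
`F(tr(f)) = i ∘ tr(F(f)) ∘ i⁻¹`, where the trace of `F(f)` is computed using the dual
pair `(F(Mᵛ), c⁻¹ ∘ F(η) ∘ i, i⁻¹ ∘ F(ε) ∘ c)` for `F(M)`. -/
theorem functor_preserves_trace
    (F : C ⥤ D) [F.LaxBraided] [IsIso (ε F)]
    (M Mv : C) (coev : 𝟙_ C ⟶ M ⊗ Mv) (ev : Mv ⊗ M ⟶ 𝟙_ C)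
    (h : IsDualPair M Mv coev ev) [IsIso (μ F M Mv)] (f : M ⟶ M) :
    F.map (trEnd M Mv coev ev f) =
      inv (ε F) ≫
        trEnd (F.obj M) (F.obj Mv)
          (ε F ≫ F.map coev ≫ inv (μ F M Mv))
          (μ F Mv M ≫ F.map ev ≫ inv (ε F)) (F.map f) ≫ ε F := by
  simp only [trEnd, Functor.map_comp, Category.assoc, IsIso.hom_inv_id_assoc,
    IsIso.inv_hom_id_assoc, IsIso.inv_hom_id, Category.comp_id]
  have key : inv (μ F M Mv) ≫ F.map f ▷ F.obj Mv ≫ (β_ (F.obj M) (F.obj Mv)).hom ≫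
      μ F Mv M = F.map (f ▷ Mv) ≫ F.map (β_ M Mv).hom := by
    rw [IsIso.inv_comp_eq, ← μ_natural_left_assoc, Functor.LaxBraided.braided]
  rw [reassoc_of% key]
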